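/- arXiv:1503.01983 — 2 statements merged into one kernel-verified Lean document; each statement's English description precedes it below -/
import Mathlib

section
/- Fix an integer k ≥ 1 and α ∈ (−1/k, −1/(k+1)), and set p = p(n) = n^α (real power). Then Var_{μ_{n,p}}[f_{n,k}] = Θ( n^{2k} · p^{2·C(k+1,2) − 1} ) as n → ∞; that is, there exist constants c > 0, Cst > 0 and N ∈ ℕ such that for all n ≥ N, c · n^{2k} · p^{2·C(k+1,2) − 1} ≤ Var_{μ_{n,p}}[f_{n,k}] ≤ Cst · n^{2k} · p^{2·C(k+1,2) − 1}. -/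
open Finset MeasureTheory Filter Real

noncomputable section

open scoped Classical
set_option maxHeartbeats 1000000

/-- The edge set `E_n`: unordered pairs of distinct elements of `[n]`. -/
abbrev Edge (n : ℕ) := {e : Sym2 (Fin n) // ¬ e.IsDiag}

/-- An edge configuration on `[n]`. -/
abbrev Config (n : ℕ) := Edge n → Bool

/-- Bernoulli(p) weight of a state. -/
def bern (p : ℝ) (b : Bool) : ℝ := if b then p else 1 - p

/-- Weight of a configuration under the static Erdős–Rényi measure `μ_{n,p}`. -/
def staticWeight (n : ℕ) (p : ℝ) (ω : Config n) : ℝ := ∏ e : Edge n, bern p (ω e)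

/-- Expectation under the static Erdős–Rényi measure `μ_{n,p}`. -/
def staticExp (n : ℕ) (p : ℝ) (f : Config n → ℝ) : ℝ :=
  ∑ ω : Config n, staticWeight n p ω * f ω

/-- Variance under the static Erdős–Rényi measure `μ_{n,p}`. -/
def staticVar (n : ℕ) (p : ℝ) (f : Config n → ℝ) : ℝ :=
  staticExp n p (fun ω => (f ω - staticExp n p f) ^ 2)

/-- `A` is a clique of the graph `G(ω)`: every pair of distinct elements of `A`
is an edge of `G(ω)`. -/
def IsCliqueOf {n : ℕ} (A : Finset (Fin n)) (ω : Config n) : Prop :=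
  ∀ e : Edge n, e.1 ∈ A.sym2 → ω e = true

/-- The clique count `f_{n,j}(ω)`: the number of `(j+1)`-element subsets of `[n]`
all of whose pairs are edges of `G(ω)`. -/
def cliqueCount (n j : ℕ) (ω : Config n) : ℕ :=
  ((Finset.powersetCard (j + 1) (Finset.univ : Finset (Fin n))).filter
    (fun A => IsCliqueOf A ω)).card

/-- Real-valued clique count. -/
def cliqueCountR (n j : ℕ) (ω : Config n) : ℝ := (cliqueCount n j ω : ℝ)

/-- The Euler characteristic `χ_n(ω) = Σ_{j=0}^{n-1} (-1)^j f_{n,j}(ω)`. -/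
def eulerChar (n : ℕ) (ω : Config n) : ℝ :=
  ∑ j ∈ Finset.range n, (-1 : ℝ) ^ j * cliqueCountR n j ω

/-- Transition probability of the stationary on/off Markov chain with invariant
law Bernoulli(p) over a time increment `s`. -/
def transP (lam p s : ℝ) (b b' : Bool) : ℝ :=
  if b then (if b' then p + (1 - p) * Real.exp (-lam * s)
             else (1 - p) * (1 - Real.exp (-lam * s)))
  else (if b' then p * (1 - Real.exp (-lam * s))
        else (1 - p) + p * Real.exp (-lam * s))

/-- Weight of a trajectory of the stationary on/off Markov chain observed at the
times `t 0 ≤ t 1 ≤ …`. -/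
def pathWeight (lam p : ℝ) {m : ℕ} (t : Fin m → ℝ) (b : Fin m → Bool) : ℝ :=
  ∏ i : Fin m,
    if (i : ℕ) = 0 then bern p (b i)
    else transP lam p (t i - t ⟨(i : ℕ) - 1, lt_of_le_of_lt (Nat.sub_le _ _) i.isLt⟩)
      (b ⟨(i : ℕ) - 1, lt_of_le_of_lt (Nat.sub_le _ _) i.isLt⟩) (b i)

/-- Weight of an `m`-tuple of edge configurations under the `m`-time dynamic
Erdős–Rényi measure `μ_{n,p}^{(t 0, …, t (m-1))}`. -/
def dynWeight (lam p : ℝ) (n : ℕ) {m : ℕ} (t : Fin m → ℝ) (ω : Fin m → Config n) : ℝ :=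
  ∏ e : Edge n, pathWeight lam p t (fun i => ω i e)

/-- Expectation under the `m`-time dynamic Erdős–Rényi measure. -/
def dynExp (lam p : ℝ) (n : ℕ) {m : ℕ} (t : Fin m → ℝ) (F : (Fin m → Config n) → ℝ) : ℝ :=
  ∑ ω : Fin m → Config n, dynWeight lam p n t ω * F ω

/-- The normalized clique count `f̄_{n,k}` (under the measure `μ_{n,p}`). -/
def fbar (n k : ℕ) (p : ℝ) (ω : Config n) : ℝ :=
  (cliqueCountR n k ω - staticExp n p (cliqueCountR n k)) /
    Real.sqrt (staticVar n p (cliqueCountR n k))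

/-- The normalized Euler characteristic `χ̄_n` (under the measure `μ_{n,p}`). -/
def chibar (n : ℕ) (p : ℝ) (ω : Config n) : ℝ :=
  (eulerChar n ω - staticExp n p (eulerChar n)) /
    Real.sqrt (staticVar n p (eulerChar n))

/-- The clique indicator `1_A(ω)` as a real number. -/
def cliqueInd {n : ℕ} (A : Finset (Fin n)) (ω : Config n) : ℝ :=
  if IsCliqueOf A ω then 1 else 0

/-- A quadruple of subsets has an independent set if one of them shares at most
one vertex with each of the others. -/
def HasIndepSet {n : ℕ} (A : Fin 4 → Finset (Fin n)) : Prop :=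
  ∃ q : Fin 4, ∀ r : Fin 4, r ≠ q → ((A q) ∩ (A r)).card ≤ 1

/-- The quantity `g(h; Ā)` built from clique indicators at three times. -/
def gQuad {n : ℕ} (A : Fin 4 → Finset (Fin n)) (ω : Fin 3 → Config n) : ℝ :=
  (cliqueInd (A 0) (ω 2) - cliqueInd (A 0) (ω 1)) *
  (cliqueInd (A 1) (ω 2) - cliqueInd (A 1) (ω 1)) *
  (cliqueInd (A 2) (ω 1) - cliqueInd (A 2) (ω 0)) *
  (cliqueInd (A 3) (ω 1) - cliqueInd (A 3) (ω 0))

/-- `ver(Ā)`: inclusion–exclusion count of vertices. -/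
def verA {n : ℕ} (A : Fin 4 → Finset (Fin n)) : ℤ :=
  (∑ q : Fin 4, ((A q).card : ℤ))
  - (∑ q : Fin 4, ∑ r : Fin 4, if q < r then (((A q) ∩ (A r)).card : ℤ) else 0)
  + (∑ q : Fin 4, ∑ r : Fin 4, ∑ s : Fin 4,
      if q < r ∧ r < s then (((A q) ∩ (A r) ∩ (A s)).card : ℤ) else 0)
  - ((A 0 ∩ A 1 ∩ A 2 ∩ A 3).card : ℤ)

/-- `pair(Ā)`: inclusion–exclusion count of potential edges. -/
def pairA {n : ℕ} (A : Fin 4 → Finset (Fin n)) : ℤ :=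
  (∑ q : Fin 4, (Nat.choose (A q).card 2 : ℤ))
  - (∑ q : Fin 4, ∑ r : Fin 4, if q < r then (Nat.choose ((A q) ∩ (A r)).card 2 : ℤ) else 0)
  + (∑ q : Fin 4, ∑ r : Fin 4, ∑ s : Fin 4,
      if q < r ∧ r < s then (Nat.choose ((A q) ∩ (A r) ∩ (A s)).card 2 : ℤ) else 0)
  - (Nat.choose (A 0 ∩ A 1 ∩ A 2 ∩ A 3).card 2 : ℤ)

/-! Write `f_{n,k} = ∑_A 1_A` over the `(k+1)`-sets `A`, and put `m = C(k+1,2)`. Two clique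
indicators whose sets share `j` vertices have covariance `p^(2m - C(j,2)) - p^(2m)`, and exactly
`C(n,k+1) C(k+1,j) C(n-k-1,k+1-j)` ordered pairs share `j` vertices, so the variance is a sum of
`k+2` explicit terms, those with `j ≤ 1` vanishing. The `j`-th term is at most
`C(k+1,j) n^(2k+2-j) p^(2m-C(j,2))`, and for `α ≥ -1/k` the last two factors are largest at `j = 2`:
this gives the upper bound. When `p ≤ 1/2` the `j = 2` term alone is of order `n^(2k) p^(2m-1)`,
which gives the lower bound. -/

section StaticMeasure

variable {n : ℕ} {p : ℝ}

theorem staticExp_sum {ι : Type*} (s : Finset ι) (f : ι → Config n → ℝ) :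
    staticExp n p (fun ω => ∑ i ∈ s, f i ω) = ∑ i ∈ s, staticExp n p (f i) := by
  simp only [staticExp, mul_sum]
  exact sum_comm

theorem staticExp_prod (g : Edge n → Bool → ℝ) :
    staticExp n p (fun ω => ∏ e, g e (ω e)) = ∏ e, ∑ b, bern p b * g e b := by
  simp only [staticExp, staticWeight, ← prod_mul_distrib]
  exact (Fintype.prod_sum fun e b => bern p b * g e b).symm

theorem staticExp_boole_forall_mem (S : Finset (Edge n)) :
    staticExp n p (fun ω => if ∀ e ∈ S, ω e = true then 1 else 0) = p ^ #S := by
  have hS : ∀ ω : Config n, (if ∀ e ∈ S, ω e = true then (1 : ℝ) else 0)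
      = ∏ e, if e ∈ S → ω e = true then 1 else 0 := by
    intro ω
    rw [prod_boole]
    simp only [mem_univ, true_imp_iff]
  rw [funext hS, staticExp_prod fun e b => if e ∈ S → b = true then 1 else 0]
  have he : ∀ e : Edge n, ∑ b, bern p b * (if e ∈ S → b = true then 1 else 0) =
      if e ∈ S then p else 1 := by
    intro e
    by_cases h : e ∈ S <;> simp [h, bern]
  simp_rw [he, prod_ite_mem, univ_inter, prod_const]

theorem sum_staticWeight : ∑ ω, staticWeight n p ω = 1 := by
  simpa [staticExp] using staticExp_boole_forall_mem (p := p) (∅ : Finset (Edge n))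

theorem staticExp_sub_sq (f : Config n → ℝ) (c : ℝ) :
    staticExp n p (fun ω => (f ω - c) ^ 2) =
      staticExp n p (fun ω => f ω ^ 2) - 2 * c * staticExp n p f + c ^ 2 := by
  rw [← mul_one (c ^ 2), ← sum_staticWeight (n := n) (p := p)]
  simp only [staticExp, mul_sum, ← sum_sub_distrib, ← sum_add_distrib]
  exact sum_congr rfl fun _ _ => by ring

theorem staticVar_eq_sub (f : Config n → ℝ) :
    staticVar n p f = staticExp n p (fun ω => f ω ^ 2) - staticExp n p f ^ 2 := by
  rw [staticVar, staticExp_sub_sq]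
  ring

theorem staticVar_sum {ι : Type*} (s : Finset ι) (f : ι → Config n → ℝ) :
    staticVar n p (fun ω => ∑ i ∈ s, f i ω) = ∑ i ∈ s, ∑ j ∈ s,
      (staticExp n p (fun ω => f i ω * f j ω) - staticExp n p (f i) * staticExp n p (f j)) := by
  simp_rw [staticVar_eq_sub, sq, sum_mul_sum, staticExp_sum, sum_mul_sum,
    ← sum_sub_distrib]

end StaticMeasure

section Counting

variable {α : Type*} [Fintype α] [DecidableEq α]

theorem card_filter_card_inter_eq (A : Finset α) {t j : ℕ} (hj : j ≤ t) :
    #{B ∈ powersetCard t univ | #(A ∩ B) = j} =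
      (#A).choose j * (Fintype.card α - #A).choose (t - j) := by
  rw [← card_powersetCard, ← card_compl, ← card_powersetCard, ← card_product]
  have hsplit : ∀ {S T : Finset α}, S ⊆ A → Disjoint T A → A ∩ (S ∪ T) = S ∧ (S ∪ T) \ A = T :=
    fun hSA hTA => ⟨by rw [inter_union_distrib_left, inter_eq_right.2 hSA,
        disjoint_iff_inter_eq_empty.1 hTA.symm, union_empty],
      by rw [union_sdiff_distrib, sdiff_eq_empty_iff_subset.2 hSA, hTA.sdiff_eq_left,
        empty_union]⟩
  refine card_nbij' (fun B => (A ∩ B, B \ A)) (fun ST => ST.1 ∪ ST.2) ?_ ?_ ?_ ?_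
  · intro B hB
    simp only [mem_coe, mem_filter, mem_powersetCard_univ] at hB
    simp only [mem_coe, mem_product, mem_powersetCard, inter_subset_left, true_and, hB.2,
      subset_compl_iff_disjoint_right, sdiff_disjoint]
    rw [card_sdiff, hB.1, hB.2]
  · rintro ⟨S, T⟩ hST
    simp only [mem_coe, mem_product, mem_powersetCard, subset_compl_iff_disjoint_right] at hST
    obtain ⟨⟨hSA, hS⟩, hTA, hT⟩ := hST
    simp only [mem_coe, mem_filter, mem_powersetCard_univ, (hsplit hSA hTA).1, hS,
      card_union_of_disjoint (disjoint_of_subset_left hSA hTA.symm), hT, and_true]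
    omega
  · intro B _
    show A ∩ B ∪ B \ A = B
    rw [inter_comm]
    exact sup_inf_sdiff B A
  · rintro ⟨S, T⟩ hST
    simp only [mem_coe, mem_product, mem_powersetCard, subset_compl_iff_disjoint_right] at hST
    simp only [hsplit hST.1.1 hST.2.1]

theorem sum_powersetCard_sum_powersetCard_card_inter {M : Type*} [AddCommMonoid M] (s : ℕ)
    (g : ℕ → M) :
    ∑ A ∈ powersetCard s (univ : Finset α), ∑ B ∈ powersetCard s univ, g #(A ∩ B) =
      ∑ j ∈ range (s + 1),
        ((Fintype.card α).choose s * s.choose j * (Fintype.card α - s).choose (s - j)) • g j := by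
  have hfibre : ∀ A ∈ powersetCard s (univ : Finset α),
      ∑ B ∈ powersetCard s univ, g #(A ∩ B) =
        ∑ j ∈ range (s + 1), (s.choose j * (Fintype.card α - s).choose (s - j)) • g j := by
    intro A hA
    have hmaps : ∀ B ∈ powersetCard s (univ : Finset α), #(A ∩ B) ∈ range (s + 1) := fun B hB =>
      mem_range_succ_iff.2 ((card_le_card inter_subset_right).trans (mem_powersetCard.1 hB).2.le)
    rw [← sum_fiberwise_of_maps_to' hmaps]
    refine sum_congr rfl fun j hj => ?_
    rw [sum_const, card_filter_card_inter_eq A (mem_range_succ_iff.1 hj),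
      (mem_powersetCard_univ.1 hA)]
  rw [sum_congr rfl hfibre, sum_const, card_powersetCard, card_univ, smul_sum]
  simp only [smul_smul, mul_assoc]

end Counting

section Cliques

variable {n : ℕ}

def cliqueEdges (A : Finset (Fin n)) : Finset (Edge n) :=
  A.sym2.subtype fun e => ¬ e.IsDiag

theorem card_cliqueEdges (A : Finset (Fin n)) : #(cliqueEdges A) = (#A).choose 2 := by
  rw [cliqueEdges, card_subtype, sym2_eq_image, Sym2.filter_image_mk_not_isDiag,
    Sym2.card_image_offDiag]

theorem cliqueEdges_inter (A B : Finset (Fin n)) :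
    cliqueEdges A ∩ cliqueEdges B = cliqueEdges (A ∩ B) := by
  ext e
  simp only [cliqueEdges, mem_inter, mem_subtype, mem_sym2_iff]
  aesop

theorem card_cliqueEdges_union_add (A B : Finset (Fin n)) :
    #(cliqueEdges A ∪ cliqueEdges B) + (#(A ∩ B)).choose 2 = (#A).choose 2 + (#B).choose 2 := by
  rw [← card_cliqueEdges, ← cliqueEdges_inter, card_union_add_card_inter,
    card_cliqueEdges, card_cliqueEdges]

theorem cliqueInd_eq_boole (A : Finset (Fin n)) (ω : Config n) :
    cliqueInd A ω = if ∀ e ∈ cliqueEdges A, ω e = true then 1 else 0 := by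
  simp [cliqueInd, IsCliqueOf, cliqueEdges]

variable {p : ℝ}

theorem staticExp_cliqueInd (A : Finset (Fin n)) :
    staticExp n p (cliqueInd A) = p ^ #(cliqueEdges A) := by
  simp_rw [funext (cliqueInd_eq_boole A), staticExp_boole_forall_mem]

theorem staticExp_cliqueInd_mul (A B : Finset (Fin n)) :
    staticExp n p (fun ω => cliqueInd A ω * cliqueInd B ω) =
      p ^ #(cliqueEdges A ∪ cliqueEdges B) := by
  simp_rw [cliqueInd_eq_boole, ite_zero_mul_ite_zero, one_mul, ← forall_mem_union,
    staticExp_boole_forall_mem]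

theorem cliqueCountR_eq_sum (k : ℕ) :
    cliqueCountR n k = fun ω => ∑ A ∈ powersetCard (k + 1) univ, cliqueInd A ω := by
  ext ω
  simp only [cliqueCountR, cliqueCount, cliqueInd, card_filter, Nat.cast_sum, Nat.cast_ite,
    Nat.cast_one, Nat.cast_zero]

end Cliques

theorem staticVar_cliqueCountR (n k : ℕ) (p : ℝ) :
    staticVar n p (cliqueCountR n k) = ∑ j ∈ range (k + 2),
      ((n.choose (k + 1) * (k + 1).choose j * (n - (k + 1)).choose (k + 1 - j) : ℕ) : ℝ) *
        (p ^ (2 * (k + 1).choose 2 - j.choose 2) - p ^ (2 * (k + 1).choose 2)) := by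
  have hcov : ∀ A ∈ powersetCard (k + 1) (univ : Finset (Fin n)),
      ∀ B ∈ powersetCard (k + 1) (univ : Finset (Fin n)),
      staticExp n p (fun ω => cliqueInd A ω * cliqueInd B ω) -
          staticExp n p (cliqueInd A) * staticExp n p (cliqueInd B) =
        p ^ (2 * (k + 1).choose 2 - (#(A ∩ B)).choose 2) - p ^ (2 * (k + 1).choose 2) := by
    intro A hA B hB
    rw [mem_powersetCard_univ] at hA hB
    have hunion := card_cliqueEdges_union_add A B
    rw [hA, hB] at hunion
    rw [staticExp_cliqueInd_mul, staticExp_cliqueInd, staticExp_cliqueInd, ← pow_add,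
      card_cliqueEdges, card_cliqueEdges, hA, hB, ← two_mul]
    congr 2
    omega
  rw [cliqueCountR_eq_sum, staticVar_sum, sum_congr rfl fun A hA => sum_congr rfl (hcov A hA),
    sum_powersetCard_sum_powersetCard_card_inter (k + 1)
      fun j => p ^ (2 * (k + 1).choose 2 - j.choose 2) - p ^ (2 * (k + 1).choose 2),
    Fintype.card_fin]
  simp only [nsmul_eq_mul]

theorem one_le_pow_mul_rpow_pow {x α : ℝ} {k j : ℕ} (hx : 1 ≤ x) (hα : -(1 / (k : ℝ)) ≤ α)
    (hj : 2 ≤ j) (hjk : j ≤ k + 1) :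
    1 ≤ x ^ (j - 2) * (x ^ α) ^ (j.choose 2 - 1) := by
  have hx0 : 0 < x := by linarith
  rw [← rpow_natCast, ← rpow_natCast, ← rpow_mul hx0.le, ← rpow_add hx0]
  refine one_le_rpow hx ?_
  push_cast [Nat.cast_sub hj, Nat.cast_sub (Nat.choose_pos hj), Nat.cast_choose_two]
  have hk : (0 : ℝ) < k := by exact_mod_cast (by omega : 0 < k)
  have hj' : (2 : ℝ) ≤ j := by exact_mod_cast hj
  have hjk' : (j : ℝ) ≤ k + 1 := by exact_mod_cast hjk
  set c : ℝ := j * (j - 1) / 2 - 1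
  have hc : c = (j - 2) * (j + 1) / 2 := by ring
  have hc0 : 0 ≤ c := by rw [hc]; positivity
  -- `j + 1 ≤ 2k` unless `j = 2`, where `c = 0`
  have hck : c ≤ k * (j - 2) := by
    rcases hj.eq_or_lt with rfl | hj3
    · norm_num [hc]
    · have : (3 : ℝ) ≤ j := by exact_mod_cast hj3
      rw [hc]
      nlinarith
  have hαc : -(c / k) ≤ α * c := by
    simpa [div_eq_inv_mul, mul_comm] using mul_le_mul_of_nonneg_right hα hc0
  have : c / k ≤ j - 2 := by rwa [div_le_iff₀ hk, mul_comm]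
  linarith

theorem pow_mul_rpow_pow_le {x α : ℝ} {k j : ℕ} (hx : 1 ≤ x) (hα : -(1 / (k : ℝ)) ≤ α)
    (hj : 2 ≤ j) (hjk : j ≤ k + 1) :
    x ^ (2 * k + 2 - j) * (x ^ α) ^ (2 * (k + 1).choose 2 - j.choose 2) ≤
      x ^ (2 * k) * (x ^ α) ^ (2 * (k + 1).choose 2 - 1) := by
  have hx0 : 0 ≤ x := by linarith
  have hc1 : 1 ≤ j.choose 2 := Nat.choose_pos hj
  have hcm : j.choose 2 ≤ (k + 1).choose 2 := Nat.choose_le_choose 2 hjk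
  have hsplit : x ^ (2 * k) * (x ^ α) ^ (2 * (k + 1).choose 2 - 1) =
      x ^ (2 * k + 2 - j) * (x ^ α) ^ (2 * (k + 1).choose 2 - j.choose 2) *
        (x ^ (j - 2) * (x ^ α) ^ (j.choose 2 - 1)) := by
    rw [mul_mul_mul_comm, ← pow_add, ← pow_add]
    congr 2 <;> omega
  rw [hsplit]
  exact le_mul_of_one_le_right (mul_nonneg (pow_nonneg hx0 _) (pow_nonneg (rpow_nonneg hx0 _) _))
    (one_le_pow_mul_rpow_pow hx hα hj hjk)

theorem staticVar_cliqueCountR_le {n k : ℕ} {α : ℝ} (hn : 1 ≤ n) (hα : -(1 / (k : ℝ)) ≤ α) :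
    staticVar n ((n : ℝ) ^ α) (cliqueCountR n k) ≤
      2 ^ (k + 1) * (n : ℝ) ^ (2 * k) * ((n : ℝ) ^ α) ^ (2 * (k + 1).choose 2 - 1) := by
  have hn' : (1 : ℝ) ≤ n := by exact_mod_cast hn
  have hp : 0 ≤ (n : ℝ) ^ α := rpow_nonneg (by linarith) α
  have hbinom : (2 : ℝ) ^ (k + 1) = ∑ j ∈ range (k + 2), ((k + 1).choose j : ℝ) := by
    exact_mod_cast (Nat.sum_range_choose (k + 1)).symm
  rw [staticVar_cliqueCountR, hbinom, sum_mul, sum_mul]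
  refine sum_le_sum fun j hj => ?_
  rcases lt_or_ge j 2 with hj2 | hj2
  · rw [Nat.choose_eq_zero_of_lt hj2, Nat.sub_zero, sub_self, mul_zero]
    positivity
  have hjk : j ≤ k + 1 := Nat.lt_succ_iff.1 (mem_range.1 hj)
  have hcount : ((n.choose (k + 1) * (k + 1).choose j * (n - (k + 1)).choose (k + 1 - j) : ℕ) : ℝ)
      ≤ (k + 1).choose j * (n : ℝ) ^ (2 * k + 2 - j) := by
    rw [show 2 * k + 2 - j = (k + 1) + (k + 1 - j) by omega, pow_add]
    have h1 : (n.choose (k + 1) : ℝ) ≤ (n : ℝ) ^ (k + 1) := by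
      exact_mod_cast Nat.choose_le_pow n (k + 1)
    have h2 : ((n - (k + 1)).choose (k + 1 - j) : ℝ) ≤ (n : ℝ) ^ (k + 1 - j) := by
      exact_mod_cast (Nat.choose_le_pow _ _).trans (Nat.pow_le_pow_left (Nat.sub_le n (k + 1)) _)
    push_cast
    calc _ = ((k + 1).choose j : ℝ) * (n.choose (k + 1) * (n - (k + 1)).choose (k + 1 - j)) := by
          ring
      _ ≤ _ := by gcongr
  calc _ ≤ ((n.choose (k + 1) * (k + 1).choose j * (n - (k + 1)).choose (k + 1 - j) : ℕ) : ℝ) *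
          ((n : ℝ) ^ α) ^ (2 * (k + 1).choose 2 - j.choose 2) :=
        mul_le_mul_of_nonneg_left (sub_le_self _ (pow_nonneg hp _)) (Nat.cast_nonneg _)
    _ ≤ (k + 1).choose j * ((n : ℝ) ^ (2 * k + 2 - j) *
          ((n : ℝ) ^ α) ^ (2 * (k + 1).choose 2 - j.choose 2)) := by
        rw [← mul_assoc]
        exact mul_le_mul_of_nonneg_right hcount (pow_nonneg hp _)
    _ ≤ (k + 1).choose j * ((n : ℝ) ^ (2 * k) * ((n : ℝ) ^ α) ^ (2 * (k + 1).choose 2 - 1)) :=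
        mul_le_mul_of_nonneg_left (pow_mul_rpow_pow_le hn' hα hj2 hjk) (Nat.cast_nonneg _)
    _ = _ := by ring

theorem pow_div_factorial_le_choose {x : ℝ} {N r : ℕ} (hx0 : 0 ≤ x) (hx : x ≤ (N + 1 - r : ℕ)) :
    x ^ r / r.factorial ≤ N.choose r :=
  (div_le_div_of_nonneg_right (pow_le_pow_left₀ hx0 hx r) (Nat.cast_nonneg _)).trans
    (Nat.pow_le_choose r N)

theorem le_staticVar_cliqueCountR {n k : ℕ} {p : ℝ} (hk : 1 ≤ k) (hn : 4 * k ≤ n) (hp0 : 0 ≤ p)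
    (hp : p ≤ 1 / 2) :
    (n : ℝ) ^ (2 * k) * p ^ (2 * (k + 1).choose 2 - 1) /
        (2 ^ (2 * k + 1) * (k + 1).factorial * (k - 1).factorial) ≤
      staticVar n p (cliqueCountR n k) := by
  have hterm : ∀ j ∈ range (k + 2), 0 ≤
      ((n.choose (k + 1) * (k + 1).choose j * (n - (k + 1)).choose (k + 1 - j) : ℕ) : ℝ) *
        (p ^ (2 * (k + 1).choose 2 - j.choose 2) - p ^ (2 * (k + 1).choose 2)) :=
    fun j _ => mul_nonneg (Nat.cast_nonneg _)
      (sub_nonneg.2 (pow_le_pow_of_le_one hp0 (by linarith) (Nat.sub_le _ _)))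
  rw [staticVar_cliqueCountR]
  refine le_trans ?_ (single_le_sum hterm (mem_range.2 (by omega : 2 < k + 2)))
  have hhalf : ∀ r : ℕ, n ≤ 2 * r → (n : ℝ) / 2 ≤ r := fun r h => by
    rw [div_le_iff₀ two_pos]
    exact_mod_cast (by omega : n ≤ r * 2)
  have hchoose₁ : ((n : ℝ) / 2) ^ (k + 1) / (k + 1).factorial ≤ n.choose (k + 1) * (k + 1).choose 2 :=
    (pow_div_factorial_le_choose (by positivity) (hhalf _ (by omega))).trans
      (le_mul_of_one_le_right (Nat.cast_nonneg _)
        (by exact_mod_cast Nat.choose_pos (by omega : 2 ≤ k + 1)))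
  have hchoose₂ : ((n : ℝ) / 2) ^ (k - 1) / (k - 1).factorial ≤ (n - (k + 1)).choose (k - 1) :=
    pow_div_factorial_le_choose (by positivity) (hhalf _ (by omega))
  have hgap : p ^ (2 * (k + 1).choose 2 - 1) / 2 ≤
      p ^ (2 * (k + 1).choose 2 - 1) - p ^ (2 * (k + 1).choose 2) := by
    have hm : 2 * (k + 1).choose 2 = 2 * (k + 1).choose 2 - 1 + 1 := by
      have := Nat.choose_pos (by omega : 2 ≤ k + 1)
      omega
    conv_rhs => rw [hm, pow_succ, ← hm]
    nlinarith [pow_nonneg hp0 (2 * (k + 1).choose 2 - 1)]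
  rw [Nat.choose_self, show k + 1 - 2 = k - 1 by omega]
  push_cast
  calc _ = ((n : ℝ) / 2) ^ (k + 1) / (k + 1).factorial *
        (((n : ℝ) / 2) ^ (k - 1) / (k - 1).factorial) *
        (p ^ (2 * (k + 1).choose 2 - 1) / 2) := by
        rw [show 2 * k = (k + 1) + (k - 1) by omega, div_pow, div_pow]
        field_simp
        ring
    _ ≤ _ := by gcongr

/-- `Var[f_{n,k}] = Θ(n^{2k} p^{2C(k+1,2)-1})` when `p = n^α`
with `α ∈ (-1/k, -1/(k+1))`. -/
theorem variance_cliqueCount_theta (k : ℕ) (hk : 1 ≤ k) (α : ℝ)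
    (hα : α ∈ Set.Ioo (-(1 / (k : ℝ))) (-(1 / ((k : ℝ) + 1)))) :
    ∃ c > (0 : ℝ), ∃ C > (0 : ℝ), ∃ N : ℕ, ∀ n ≥ N,
      c * (n : ℝ) ^ (2 * k) * ((n : ℝ) ^ α) ^ (2 * Nat.choose (k + 1) 2 - 1) ≤
          staticVar n ((n : ℝ) ^ α) (cliqueCountR n k) ∧
        staticVar n ((n : ℝ) ^ α) (cliqueCountR n k) ≤
          C * (n : ℝ) ^ (2 * k) * ((n : ℝ) ^ α) ^ (2 * Nat.choose (k + 1) 2 - 1) := by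
  obtain ⟨hα₁, hα₂⟩ := hα
  have hα₀ : α < 0 := hα₂.trans (neg_lt_zero.2 (by positivity))
  have hp : Tendsto (fun n : ℕ => (n : ℝ) ^ α) atTop (nhds 0) := by
    have := (tendsto_rpow_neg_atTop (neg_pos.2 hα₀)).comp tendsto_natCast_atTop_atTop
    rwa [neg_neg] at this
  obtain ⟨N, hN⟩ := eventually_atTop.1 (hp.eventually (ge_mem_nhds (by norm_num : (0 : ℝ) < 1 / 2)))
  refine ⟨1 / (2 ^ (2 * k + 1) * (k + 1).factorial * (k - 1).factorial), by positivity,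
    2 ^ (k + 1), by positivity, max N (4 * k), fun n hn => ⟨?_, ?_⟩⟩
  · rw [one_div_mul_eq_div, div_mul_eq_mul_div]
    exact le_staticVar_cliqueCountR hk (le_of_max_le_right hn) (rpow_nonneg n.cast_nonneg α)
      (hN n (le_of_max_le_left hn))
  · exact staticVar_cliqueCountR_le (by omega) hα₁.le

end
end

section
/- Fix λ > 0, n ≥ 1, p ∈ [0,1] and h ≥ 0, and let (ω₀,ω₁,ω₂) be distributed according to the three-time dynamic Erdős–Rényi measure μ_{n,p}^{(0,h,2h)}. Let Ā = (A₁,A₂,A₃,A₄) be a quadruple of subsets of [n]. If Ā has an independent set, then E[ g(Ā) ] = 0. -/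
/-!
Under the dynamic Erdős–Rényi measure the edges evolve as independent copies of a stationary
two-state chain. Let `A q` meet every other `A r` in at most one vertex. Then no edge lies inside
both `A q` and some other `A r`, so the factor of `g` belonging to `A q` is a function of the
edges inside `A q`, while the product of the other three factors only sees the remaining edges.
The expectation therefore factorizes, and the first factor has mean zero: by stationarity, the
probability that `A q` is a clique is the same at every observation time.
-/

open Finset MeasureTheory Filter Real

noncomputable section

open scoped Classical

section ProductWeight

variable {ι α R : Type*} [Fintype ι] [DecidableEq ι] [Fintype α] [CommSemiring R]

theorem sum_prod_mul_prod_eq_prod_sum (w φ : ι → α → R) :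
    ∑ x : ι → α, (∏ i, w i (x i)) * ∏ i, φ i (x i) = ∏ i, ∑ a, w i a * φ i a := by
  simp_rw [Fintype.prod_sum, Finset.prod_mul_distrib]

theorem sum_prod_mul_mul_eq_of_dependsOn (w : ι → α → R) (hw : ∀ i, ∑ a, w i a = 1)
    {s : Set ι} [DecidablePred (· ∈ s)] {f g : (ι → α) → R}
    (hf : DependsOn f s) (hg : DependsOn g sᶜ) :
    ∑ x, (∏ i, w i (x i)) * (f x * g x) =
      (∑ x, (∏ i, w i (x i)) * f x) * ∑ x, (∏ i, w i (x i)) * g x := by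
  set W : (ι → α) → R := fun x => ∏ i, w i (x i)
  have hW : ∑ x, W x = 1 := by simp only [W, ← Fintype.prod_sum, hw, Finset.prod_const_one]
  -- Exchanging the coordinates of `x` and `y` outside `s` preserves the weight of the pair.
  let swap (xy : (ι → α) × (ι → α)) : (ι → α) × (ι → α) :=
    (s.piecewise xy.1 xy.2, s.piecewise xy.2 xy.1)
  have hswap : Function.Involutive swap := fun xy => by
    ext i <;> by_cases hi : i ∈ s <;> simp [swap, hi]
  have hW_swap (xy) : W (swap xy).1 * W (swap xy).2 = W xy.1 * W xy.2 := by
    simp only [W, ← Finset.prod_mul_distrib]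
    refine Finset.prod_congr rfl fun i _ => ?_
    by_cases hi : i ∈ s <;> simp [swap, hi, mul_comm]
  calc ∑ x, W x * (f x * g x)
      = ∑ xy : (ι → α) × (ι → α), W xy.1 * W xy.2 * (f xy.1 * g xy.1) := by
        simp only [Fintype.sum_prod_type, mul_assoc, ← Finset.mul_sum, ← Finset.sum_mul, hW,
          one_mul]
    _ = ∑ xy, W (swap xy).1 * W (swap xy).2 * (f (swap xy).1 * g (swap xy).2) := by
        refine Fintype.sum_congr _ _ fun xy => ?_
        rw [hW_swap]
        congr 2
        · exact hf fun i hi => by simp [swap, hi]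
        · exact hg fun i hi => by simp [swap, show i ∉ s from hi]
    _ = ∑ xy : (ι → α) × (ι → α), W xy.1 * W xy.2 * (f xy.1 * g xy.2) :=
        Equiv.sum_comp hswap.toPerm fun xy : (ι → α) × (ι → α) ↦
          W xy.1 * W xy.2 * (f xy.1 * g xy.2)
    _ = (∑ x, W x * f x) * ∑ x, W x * g x := by
        simp only [Fintype.sum_prod_type, Finset.sum_mul_sum]
        exact Fintype.sum_congr _ _ fun x => Fintype.sum_congr _ _ fun y => by ring

end ProductWeight

theorem Finset.notMem_sym2_of_card_inter_le_one {α : Type*} [DecidableEq α] {s t : Finset α}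
    (hst : #(s ∩ t) ≤ 1) {e : Sym2 α} (he : ¬e.IsDiag) (hs : e ∈ s.sym2) :
    e ∉ t.sym2 := by
  induction e using Sym2.inductionOn with
  | hf u v =>
    intro ht
    rw [Finset.mk_mem_sym2_iff] at hs ht
    have huv : u ≠ v := by simpa using he
    have : 1 < #(s ∩ t) := Finset.one_lt_card.2
      ⟨u, Finset.mem_inter.2 ⟨hs.1, ht.1⟩, v, Finset.mem_inter.2 ⟨hs.2, ht.2⟩, huv⟩
    omega

theorem sum_pi_fin_succ {β M : Type*} [Fintype β] [AddCommMonoid M] {m : ℕ}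
    (f : (Fin (m + 1) → β) → M) :
    ∑ b, f b = ∑ x, ∑ b : Fin m → β, f (Matrix.vecCons x b) := by
  rw [← (Fin.consEquiv fun _ => β).sum_comp, Fintype.sum_prod_type]
  rfl

section DynamicErdosRenyi

variable {n : ℕ} (lam p : ℝ)

theorem pathWeight_three (t : Fin 3 → ℝ) (b : Fin 3 → Bool) :
    pathWeight lam p t b =
      bern p (b 0) * transP lam p (t 1 - t 0) (b 0) (b 1) *
        transP lam p (t 2 - t 1) (b 1) (b 2) := by
  rw [pathWeight, Fin.prod_univ_three]
  rfl

theorem sum_pathWeight_three (t : Fin 3 → ℝ) : ∑ b, pathWeight lam p t b = 1 := by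
  simp only [sum_pi_fin_succ, Fintype.sum_bool, Fintype.sum_unique, pathWeight_three]
  simp only [bern, transP, Matrix.cons_val_zero, Matrix.cons_val_one, Matrix.cons_val,
    ↓reduceIte, Bool.false_eq_true]
  ring

theorem sum_pathWeight_three_mul_ite (t : Fin 3 → ℝ) (k : Fin 3) :
    ∑ b, pathWeight lam p t b * (if b k then 1 else 0) = p := by
  simp only [sum_pi_fin_succ, Fintype.sum_bool, Fintype.sum_unique, pathWeight_three]
  fin_cases k <;>
  simp only [bern, transP, Matrix.cons_val_zero, Matrix.cons_val_one, Matrix.cons_val,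
    Fin.zero_eta, Fin.mk_one, Fin.reduceFinMk, ↓reduceIte, Bool.false_eq_true] <;>
  ring

theorem dynExp_eq_sum_edges {m : ℕ} (t : Fin m → ℝ) (F : (Fin m → Config n) → ℝ) :
    dynExp lam p n t F =
      ∑ η : Edge n → Fin m → Bool,
        (∏ e, pathWeight lam p t (η e)) * F (Function.swap η) :=
  ((Equiv.piComm fun (_ : Edge n) (_ : Fin m) => Bool).sum_comp _).symm

theorem dynExp_sub {m : ℕ} (t : Fin m → ℝ) (F G : (Fin m → Config n) → ℝ) :
    dynExp lam p n t (fun ω => F ω - G ω) = dynExp lam p n t F - dynExp lam p n t G := by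
  simp only [dynExp, mul_sub, Finset.sum_sub_distrib]

theorem dynExp_mul_eq_mul_of_dependsOn (t : Fin 3 → ℝ) {S : Set (Edge n)}
    {F G : (Fin 3 → Config n) → ℝ}
    (hF : DependsOn (fun η : Edge n → Fin 3 → Bool => F (Function.swap η)) S)
    (hG : DependsOn (fun η : Edge n → Fin 3 → Bool => G (Function.swap η)) Sᶜ) :
    dynExp lam p n t (fun ω => F ω * G ω) = dynExp lam p n t F * dynExp lam p n t G := by
  simp only [dynExp_eq_sum_edges]
  exact sum_prod_mul_mul_eq_of_dependsOn _ (fun _ => sum_pathWeight_three lam p t) hF hG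

theorem cliqueInd_eq_prod (A : Finset (Fin n)) (ω : Config n) :
    cliqueInd A ω = ∏ e : Edge n, if e.1 ∈ A.sym2 then (if ω e then 1 else 0) else 1 := by
  by_cases hA : IsCliqueOf A ω
  · refine (if_pos hA).trans (Finset.prod_eq_one fun e _ => ?_).symm
    by_cases he : e.1 ∈ A.sym2 <;> simp [he, hA e]
  · obtain ⟨e, he, hωe⟩ : ∃ e : Edge n, e.1 ∈ A.sym2 ∧ ω e = false := by
      simpa [IsCliqueOf] using hA
    refine (if_neg hA).trans (Finset.prod_eq_zero (Finset.mem_univ e) ?_).symm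
    simp [he, hωe]

theorem cliqueInd_congr (A : Finset (Fin n)) {ω ω' : Config n}
    (h : ∀ e : Edge n, e.1 ∈ A.sym2 → ω e = ω' e) : cliqueInd A ω = cliqueInd A ω' := by
  unfold cliqueInd IsCliqueOf
  congr 1
  exact propext <| forall_congr' fun e => forall_congr' fun he => by rw [h e he]

theorem dynExp_cliqueInd (t : Fin 3 → ℝ) (A : Finset (Fin n)) (k : Fin 3) :
    dynExp lam p n t (fun ω => cliqueInd A (ω k)) =
      ∏ e : Edge n, if e.1 ∈ A.sym2 then p else 1 := by
  simp only [dynExp_eq_sum_edges, cliqueInd_eq_prod]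
  refine (sum_prod_mul_prod_eq_prod_sum _ fun (e : Edge n) (b : Fin 3 → Bool) =>
    if e.1 ∈ A.sym2 then (if b k then (1 : ℝ) else 0) else 1).trans
    (Finset.prod_congr rfl fun e _ => ?_)
  split_ifs
  · exact sum_pathWeight_three_mul_ite lam p t k
  · simpa using sum_pathWeight_three lam p t

end DynamicErdosRenyi

section CliqueIncrements

variable {n : ℕ} (A : Fin 4 → Finset (Fin n))

def cliqueIncrement (r : Fin 4) (ω : Fin 3 → Config n) : ℝ :=
  cliqueInd (A r) (ω (![2, 2, 1, 1] r)) - cliqueInd (A r) (ω (![1, 1, 0, 0] r))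

theorem gQuad_eq_prod_cliqueIncrement : gQuad A = fun ω => ∏ r, cliqueIncrement A r ω := by
  funext ω
  simp [gQuad, cliqueIncrement, Fin.prod_univ_four]

theorem dependsOn_cliqueIncrement (r : Fin 4) :
    DependsOn (fun η : Edge n → Fin 3 → Bool => cliqueIncrement A r (Function.swap η))
      {e | e.1 ∈ (A r).sym2} := fun η η' h => by
  simp only [cliqueIncrement]
  congr 1 <;> exact cliqueInd_congr _ fun e he => congrFun (h e he) _

theorem dynExp_cliqueIncrement (lam p : ℝ) (t : Fin 3 → ℝ) (r : Fin 4) :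
    dynExp lam p n t (cliqueIncrement A r) = 0 := by
  unfold cliqueIncrement
  rw [dynExp_sub, dynExp_cliqueInd, dynExp_cliqueInd, sub_self]

end CliqueIncrements

theorem expectation_gQuad_eq_zero_of_indep_general (lam : ℝ) (n : ℕ) (p : ℝ) (h : ℝ)
    (A : Fin 4 → Finset (Fin n)) (hA : HasIndepSet A) :
    dynExp lam p n ![0, h, 2 * h] (gQuad A) = 0 := by
  obtain ⟨q, hq⟩ := hA
  have hdisj : ∀ r ∈ Finset.univ.erase q,
      {e : Edge n | e.1 ∈ (A r).sym2} ⊆ {e | e.1 ∈ (A q).sym2}ᶜ := fun r hr e he hq' =>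
    Finset.notMem_sym2_of_card_inter_le_one (hq r (Finset.ne_of_mem_erase hr)) e.2 hq' he
  have hsplit : gQuad A =
      fun ω => cliqueIncrement A q ω * ∏ r ∈ Finset.univ.erase q, cliqueIncrement A r ω := by
    rw [gQuad_eq_prod_cliqueIncrement]
    exact funext fun ω => (Finset.mul_prod_erase _ _ (Finset.mem_univ q)).symm
  have hrest : DependsOn (fun η : Edge n → Fin 3 → Bool =>
      ∏ r ∈ Finset.univ.erase q, cliqueIncrement A r (Function.swap η))
      {e | e.1 ∈ (A q).sym2}ᶜ :=
    fun η η' hη => Finset.prod_congr rfl fun r hr =>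
      (dependsOn_cliqueIncrement A r).mono (hdisj r hr) hη
  rw [hsplit, dynExp_mul_eq_mul_of_dependsOn lam p _ (dependsOn_cliqueIncrement A q) hrest,
    dynExp_cliqueIncrement, zero_mul]

/-- If the quadruple `Ā` has an independent set, then
`E[g(Ā)] = 0` under the three-time dynamic Erdős–Rényi measure. -/
theorem expectation_gQuad_eq_zero_of_indep (lam : ℝ) (hlam : 0 < lam)
    (n : ℕ) (hn : 1 ≤ n) (p : ℝ) (hp : p ∈ Set.Icc (0 : ℝ) 1)
    (h : ℝ) (hh : 0 ≤ h) (A : Fin 4 → Finset (Fin n)) (hA : HasIndepSet A) :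
    dynExp lam p n ![0, h, 2 * h] (gQuad A) = 0 :=
  expectation_gQuad_eq_zero_of_indep_general lam n p h A hA

end
end
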